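/- Let T := {(vᵢ − uᵢ)/aᵢ : aᵢ ≠ 0} ∪ {(vᵢ − lᵢ)/aᵢ : aᵢ ≠ 0} be the set of breakpoints. Then g is piecewise linear with breakpoints in T: for all real s < t such that the open interval (s,t) contains no element of T, g is affine on [s,t], i.e. g((1−μ)s + μt) = (1−μ)g(s) + μ g(t) for every μ ∈ [0,1]. -/
import Mathlib


/-- `clamp(t; l, u) = max(l, min(u, t))`. -/
def clamp (l u t : ℝ) : ℝ := max l (min u t)

/-- `g(λ) = d − ∑ᵢ aᵢ · clamp(vᵢ − λ aᵢ; lᵢ, uᵢ)`, the derivative of the dual function of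
the projection problem onto `K ∩ L`. -/
def gFun {n : ℕ} (l u a v : Fin n → ℝ) (d : ℝ) (lam : ℝ) : ℝ :=
  d - ∑ i, a i * clamp (l i) (u i) (v i - lam * a i)

/-- The set of breakpoints `T = {(vᵢ−uᵢ)/aᵢ : aᵢ ≠ 0} ∪ {(vᵢ−lᵢ)/aᵢ : aᵢ ≠ 0}`. -/
def breakpoints {n : ℕ} (l u a v : Fin n → ℝ) : Set ℝ :=
  {t | ∃ i, a i ≠ 0 ∧ t = (v i - u i) / a i} ∪ {t | ∃ i, a i ≠ 0 ∧ t = (v i - l i) / a i}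

lemma clamp_of_ge (l u x : ℝ) (hlu : l < u) (h : u ≤ x) : clamp l u x = u := by
  unfold clamp
  rw [min_eq_left h, max_eq_right hlu.le]

lemma clamp_of_le (l u x : ℝ) (hlu : l < u) (h : x ≤ l) : clamp l u x = l := by
  unfold clamp
  rw [min_eq_right (h.trans hlu.le), max_eq_left h]

lemma clamp_of_mem (l u x : ℝ) (h1 : l ≤ x) (h2 : x ≤ u) : clamp l u x = x := by
  unfold clamp
  rw [min_eq_right h2, max_eq_right h1]

lemma clamp_affine_key (a v l u : ℝ) (hlu : l < u) (s t : ℝ) (hst : s < t)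
    (hbu : a ≠ 0 → (v - u) / a ∉ Set.Ioo s t)
    (hbl : a ≠ 0 → (v - l) / a ∉ Set.Ioo s t)
    (μ : ℝ) (hμ0 : 0 ≤ μ) (hμ1 : μ ≤ 1) :
    clamp l u (v - ((1 - μ) * s + μ * t) * a) =
      (1 - μ) * clamp l u (v - s * a) + μ * clamp l u (v - t * a) := by
  rcases eq_or_ne a 0 with ha | ha
  · subst ha; ring_nf
  set m := (1 - μ) * s + μ * t with hm
  have hms : s ≤ m := by nlinarith
  have hmt : m ≤ t := by nlinarith
  -- dichotomy for u
  have hbu' : (v - u) / a ≤ s ∨ t ≤ (v - u) / a := by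
    by_contra hc
    push_neg at hc
    exact hbu ha ⟨hc.1, hc.2⟩
  have hbl' : (v - l) / a ≤ s ∨ t ≤ (v - l) / a := by
    by_contra hc
    push_neg at hc
    exact hbl ha ⟨hc.1, hc.2⟩
  have hau : v - u = a * ((v - u) / a) := by field_simp
  have hal : v - l = a * ((v - l) / a) := by field_simp
  have Hu : (∀ x, s ≤ x → x ≤ t → v - x * a ≤ u) ∨ (∀ x, s ≤ x → x ≤ t → u ≤ v - x * a) := by
    rcases lt_or_gt_of_ne ha with ha' | ha'
    · rcases hbu' with h | h
      · right; intro x hx1 hx2; nlinarith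
      · left; intro x hx1 hx2; nlinarith
    · rcases hbu' with h | h
      · left; intro x hx1 hx2; nlinarith
      · right; intro x hx1 hx2; nlinarith
  have Hl : (∀ x, s ≤ x → x ≤ t → v - x * a ≤ l) ∨ (∀ x, s ≤ x → x ≤ t → l ≤ v - x * a) := by
    rcases lt_or_gt_of_ne ha with ha' | ha'
    · rcases hbl' with h | h
      · right; intro x hx1 hx2; nlinarith
      · left; intro x hx1 hx2; nlinarith
    · rcases hbl' with h | h
      · left; intro x hx1 hx2; nlinarith
      · right; intro x hx1 hx2; nlinarith
  rcases Hu with Hu | Hu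
  · rcases Hl with Hl | Hl
    · -- everything ≤ l : clamp = l
      rw [clamp_of_le _ _ _ hlu (Hl s le_rfl hst.le),
          clamp_of_le _ _ _ hlu (Hl t hst.le le_rfl),
          clamp_of_le _ _ _ hlu (Hl m hms hmt)]
      ring
    · -- l ≤ h ≤ u : clamp = identity
      rw [clamp_of_mem _ _ _ (Hl s le_rfl hst.le) (Hu s le_rfl hst.le),
          clamp_of_mem _ _ _ (Hl t hst.le le_rfl) (Hu t hst.le le_rfl),
          clamp_of_mem _ _ _ (Hl m hms hmt) (Hu m hms hmt)]
      ring
  · -- everything ≥ u : clamp = u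
    rw [clamp_of_ge _ _ _ hlu (Hu s le_rfl hst.le),
        clamp_of_ge _ _ _ hlu (Hu t hst.le le_rfl),
        clamp_of_ge _ _ _ hlu (Hu m hms hmt)]
    ring

/-- `g` is piecewise linear with breakpoints in `T`: it is affine on any interval `[s,t]`
whose interior contains no breakpoint. -/
theorem gFun_affine_between_breakpoints {n : ℕ} (hn : 1 ≤ n)
    (l u a v : Fin n → ℝ) (hlu : ∀ i, l i < u i) (d : ℝ) :
    ∀ s t : ℝ, s < t → (∀ τ ∈ Set.Ioo s t, τ ∉ breakpoints l u a v) →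
      ∀ μ ∈ Set.Icc (0 : ℝ) 1,
        gFun l u a v d ((1 - μ) * s + μ * t) =
          (1 - μ) * gFun l u a v d s + μ * gFun l u a v d t := by
  intro s t hst hbp μ hμ
  obtain ⟨hμ0, hμ1⟩ := hμ
  have key : ∀ i : Fin n,
      a i * clamp (l i) (u i) (v i - ((1 - μ) * s + μ * t) * a i) =
        (1 - μ) * (a i * clamp (l i) (u i) (v i - s * a i)) +
          μ * (a i * clamp (l i) (u i) (v i - t * a i)) := by
    intro i
    have hbu : a i ≠ 0 → (v i - u i) / a i ∉ Set.Ioo s t := by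
      intro ha hmem
      exact hbp _ hmem (Or.inl ⟨i, ha, rfl⟩)
    have hbl : a i ≠ 0 → (v i - l i) / a i ∉ Set.Ioo s t := by
      intro ha hmem
      exact hbp _ hmem (Or.inr ⟨i, ha, rfl⟩)
    rw [clamp_affine_key (a i) (v i) (l i) (u i) (hlu i) s t hst hbu hbl μ hμ0 hμ1]
    ring
  simp only [gFun]
  have : ∑ i, a i * clamp (l i) (u i) (v i - ((1 - μ) * s + μ * t) * a i) =
      ∑ i, ((1 - μ) * (a i * clamp (l i) (u i) (v i - s * a i)) +
        μ * (a i * clamp (l i) (u i) (v i - t * a i))) :=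
    Finset.sum_congr rfl fun i _ => key i
  rw [this, Finset.sum_add_distrib, ← Finset.mul_sum, ← Finset.mul_sum]
  ring
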